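/- arXiv:2307.14096 — 2 statements merged into one kernel-verified Lean document; each statement's English description precedes it below -/
import Mathlib

section
/- Let κ ∈ ℝⁿ with κ₁ ≥ κ₂ ≥ ... ≥ κ_n and suppose κ lies in the Garding cone Γ_m⁺ (i.e., σ_l(κ) > 0 for all 1 ≤ l ≤ m). Then for 1 ≤ m ≤ n, κ₁·σ_{m−1,1}(κ) ≥ (m/n)·σ_m(κ). -/
/-!
Write `σ_m(κ) = σ_m(κ|1) + κ₁ σ_{m-1}(κ|1)`. If `σ_m(κ|1) ≤ 0` the bound is immediate. Otherwise
`κ|1 ∈ Γ_m⁺`, and the identities `Σ_i κ_i σ_{m-1}(κ|1i) = m σ_m(κ|1)` and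
`Σ_i σ_{m-1}(κ|1i) = (n - m) σ_{m-1}(κ|1)` (sums over `i ≠ 1`), together with `κ_i ≤ κ₁` and
`σ_{m-1}(κ|1i) > 0`, give `m σ_m(κ|1) ≤ (n - m) κ₁ σ_{m-1}(κ|1)`.

The positivity is the fact that deleting an entry of a vector of `Γ_{k+1}⁺` leaves a vector with
`σ_k > 0`. It follows from Newton's inequality `σ_k σ_{k+2} ≤ σ_{k+1}²`, which is proved the
classical way: by Rolle's theorem, differentiating `∏ (X - a)` preserves the normalised means
`σ_l / (N choose l)`, so one may pass to `k + 2` points, invert them, and pass to two points.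
-/

/-- The `k`-th elementary symmetric function of `κ ∈ ℝⁿ`. -/
noncomputable def esymm (n k : ℕ) (κ : Fin n → ℝ) : ℝ :=
  ∑ s ∈ (Finset.univ : Finset (Fin n)).powersetCard k, ∏ j ∈ s, κ j

/-- `σ_{k,i}(κ)`: the sum of the terms of `σ_k(κ)` not containing the factor `κ i`. -/
noncomputable def esymmRem (n k : ℕ) (i : Fin n) (κ : Fin n → ℝ) : ℝ :=
  ∑ s ∈ ((Finset.univ : Finset (Fin n)).erase i).powersetCard k, ∏ j ∈ s, κ j

theorem Nat.choose_mul_choose_add_two_le_sq (n k : ℕ) :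
    n.choose k * n.choose (k + 2) ≤ n.choose (k + 1) ^ 2 := by
  rcases Nat.lt_or_ge n (k + 1) with hn | hn
  · simp [Nat.choose_eq_zero_of_lt (by omega : n < k + 2)]
  obtain ⟨r, rfl⟩ := Nat.exists_eq_add_of_le hn
  have h1 := Nat.choose_succ_right_eq (k + 1 + r) k
  have h2 := Nat.choose_succ_right_eq (k + 1 + r) (k + 1)
  rw [show k + 1 + r - k = r + 1 by omega] at h1
  rw [show k + 1 + r - (k + 1) = r by omega] at h2
  refine le_of_mul_le_mul_right (a := (r + 1) * (k + 2)) ?_ (by positivity)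
  calc _ = ((k + 1 + r).choose (k + 1) * (k + 1)) * ((k + 1 + r).choose (k + 1) * r) := by
        rw [h1, ← h2]; ring
    _ ≤ _ := by rw [sq]; nlinarith [Nat.zero_le ((k + 1 + r).choose (k + 1))]

namespace Multiset

section CommSemiring

variable {R : Type*} [CommSemiring R]

theorem esymm_zero (S : Multiset R) : S.esymm 0 = 1 := by
  simp [esymm, powersetCard_zero_left]

theorem esymm_cons_succ (a : R) (S : Multiset R) (k : ℕ) :
    (a ::ₘ S).esymm (k + 1) = S.esymm (k + 1) + a * S.esymm k := by
  simp only [esymm, powersetCard_cons, map_add, sum_add, map_map, Function.comp_def, prod_cons,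
    sum_map_mul_left]

theorem esymm_eq_zero_of_card_lt {S : Multiset R} {k : ℕ} (h : card S < k) : S.esymm k = 0 := by
  simp [esymm, powersetCard_eq_empty _ h]

theorem le_card_of_esymm_ne_zero {S : Multiset R} {k : ℕ} (h : S.esymm k ≠ 0) : k ≤ card S :=
  not_lt.1 fun hlt => h (esymm_eq_zero_of_card_lt hlt)

theorem esymm_card (S : Multiset R) : S.esymm (card S) = S.prod := by
  simp [esymm, powersetCard_self]

end CommSemiring

section Field

variable {K : Type*} [Field K]

theorem esymm_map_inv_mul_prod {S : Multiset K} (h0 : (0 : K) ∉ S) {i j : ℕ}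
    (hij : i + j = card S) : (S.map (·⁻¹)).esymm i * S.prod = S.esymm j := by
  induction S using Multiset.induction_on generalizing i j with
  | empty =>
    obtain ⟨rfl, rfl⟩ : i = 0 ∧ j = 0 := by simpa using hij
    simp
  | cons a S ih =>
    have ha : a ≠ 0 := fun h => h0 (h ▸ mem_cons_self a S)
    have h0' : (0 : K) ∉ S := fun h => h0 (mem_cons_of_mem h)
    rcases i with _ | i
    · rw [zero_add] at hij
      rw [hij, esymm_card, esymm_zero, one_mul]
    rcases j with _ | j
    · rw [add_zero] at hij
      rw [hij, ← card_map (·⁻¹), esymm_card, prod_map_inv', inv_mul_cancel₀ (prod_ne_zero h0),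
        esymm_zero]
    rw [card_cons] at hij
    rw [map_cons, esymm_cons_succ, esymm_cons_succ, prod_cons,
      ← ih h0' (by omega : i + (j + 1) = card S), ← ih h0' (by omega : i + 1 + j = card S)]
    field_simp
    ring

noncomputable def esymmMean (S : Multiset K) (k : ℕ) : K :=
  S.esymm k / (card S).choose k

theorem esymmMean_map_inv_mul {S : Multiset K} (h0 : (0 : K) ∉ S) {i j : ℕ}
    (hij : i + j = card S) :
    (S.map (·⁻¹)).esymmMean i * S.esymmMean (card S) = S.esymmMean j := by
  rw [esymmMean, esymmMean, esymmMean, card_map, Nat.choose_self, Nat.cast_one, div_one,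
    esymm_card, div_mul_eq_mul_div, esymm_map_inv_mul_prod h0 hij, ← hij, Nat.choose_symm_add]

end Field

section Rolle

open Polynomial

theorem card_roots_derivative_prod_X_sub_C (S : Multiset ℝ) :
    card (derivative (S.map fun a => X - C a).prod).roots = card S - 1 := by
  set p := (S.map fun a => X - C a).prod
  have hdeg : p.natDegree = card S := natDegree_multiset_prod_X_sub_C_eq_card S
  have hle : card (derivative p).roots ≤ card S - 1 :=
    (card_roots' _).trans (natDegree_derivative_le p |>.trans_eq (by rw [hdeg]))
  have hge := card_roots_le_derivative p
  rw [roots_multiset_prod_X_sub_C] at hge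
  omega

theorem esymm_roots_derivative_prod_X_sub_C {S : Multiset ℝ} {D l : ℕ} (hS : card S = D + 1)
    (hl : l ≤ D) :
    ((D : ℝ) + 1) * (derivative (S.map fun a => X - C a).prod).roots.esymm l =
      (D + 1 - l) * S.esymm l := by
  set p : ℝ[X] := (S.map fun a => X - C a).prod
  have hmonic : p.Monic := monic_multiset_prod_of_monic _ _ fun a _ => monic_X_sub_C a
  have hdeg : p.natDegree = D + 1 := by rw [natDegree_multiset_prod_X_sub_C_eq_card, hS]
  have hroots : card (derivative p).roots = D := by
    rw [card_roots_derivative_prod_X_sub_C, hS, Nat.add_sub_cancel]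
  have hdeg' : (derivative p).natDegree = D :=
    le_antisymm (natDegree_derivative_le p |>.trans_eq (by rw [hdeg, Nat.add_sub_cancel]))
      (hroots ▸ card_roots' _)
  have hlead : (derivative p).leadingCoeff = D + 1 := by
    rw [leadingCoeff, hdeg', coeff_derivative, ← Nat.cast_succ, ← hdeg, ← leadingCoeff,
      hmonic.leadingCoeff, one_mul]
  have hcoeff := coeff_eq_esymm_roots_of_card (hroots.trans hdeg'.symm) (k := D - l) (by omega)
  have hS' : p.coeff (D - l + 1) = _ := prod_X_sub_C_coeff S (k := D - l + 1) (by omega)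
  rw [coeff_derivative, hS', hlead, hdeg', Nat.sub_sub_self hl, hS,
    show D + 1 - (D - l + 1) = l by omega, Nat.cast_sub hl] at hcoeff
  have hsign : ((-1 : ℝ) ^ l) ^ 2 = 1 := by rw [← pow_mul, mul_comm, pow_mul]; norm_num
  linear_combination -(-1) ^ l * hcoeff + (D + 1 - l) * S.esymm l * hsign
    - (D + 1) * (derivative p).roots.esymm l * hsign

theorem exists_esymmMean_eq_of_card_eq_succ {S : Multiset ℝ} {D : ℕ} (hS : card S = D + 1) :
    ∃ T : Multiset ℝ, card T = D ∧ ∀ l ≤ D, T.esymmMean l = S.esymmMean l := by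
  refine ⟨_, (card_roots_derivative_prod_X_sub_C S).trans (by omega), fun l hl => ?_⟩
  have hT := esymm_roots_derivative_prod_X_sub_C hS hl
  have hchoose : ((D.choose l : ℕ) : ℝ) * (D + 1) = ((D + 1).choose l : ℕ) * (D + 1 - l) := by
    have h := congrArg (Nat.cast : ℕ → ℝ) (Nat.choose_mul_succ_eq D l)
    push_cast [Nat.cast_sub (by omega : l ≤ D + 1)] at h
    exact h
  have hpos : (0 : ℝ) < D.choose l := by exact_mod_cast Nat.choose_pos hl
  have hpos' : (0 : ℝ) < (D + 1).choose l := by exact_mod_cast Nat.choose_pos (by omega)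
  rw [esymmMean, esymmMean, card_roots_derivative_prod_X_sub_C, hS, Nat.add_sub_cancel,
    div_eq_div_iff hpos.ne' hpos'.ne']
  refine mul_right_cancel₀ (by positivity : (D : ℝ) + 1 ≠ 0) ?_
  linear_combination ((D + 1).choose l : ℝ) * hT - S.esymm l * hchoose

end Rolle

theorem exists_esymmMean_eq_of_le_card {S : Multiset ℝ} {M : ℕ} (hM : M ≤ card S) :
    ∃ T : Multiset ℝ, card T = M ∧ ∀ l ≤ M, T.esymmMean l = S.esymmMean l := by
  obtain ⟨d, hd⟩ := Nat.exists_eq_add_of_le hM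
  clear hM
  induction d generalizing S with
  | zero => exact ⟨S, hd, fun _ _ => rfl⟩
  | succ d ih =>
    obtain ⟨T, hT, hTS⟩ := exists_esymmMean_eq_of_card_eq_succ hd
    obtain ⟨U, hU, hUT⟩ := ih hT
    exact ⟨U, hU, fun l hl => (hUT l hl).trans (hTS l (Nat.le_add_right_of_le hl))⟩

theorem esymmMean_two_le_sq {S : Multiset ℝ} (hS : 2 ≤ card S) :
    S.esymmMean 2 ≤ S.esymmMean 1 ^ 2 := by
  obtain ⟨T, hT, hTS⟩ := exists_esymmMean_eq_of_le_card hS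
  rw [← hTS 1 (by norm_num), ← hTS 2 le_rfl]
  obtain ⟨x, y, rfl⟩ := card_eq_two.mp hT
  simp only [esymmMean, insert_eq_cons, esymm_pair_one, esymm_pair_two]
  norm_num
  nlinarith [sq_nonneg (x - y)]

/-- Newton's inequality. Inverting `k + 2` points exchanges the means of orders `j` and
`k + 2 - j`, which turns it into the case `k = 0`. -/
theorem esymmMean_mul_le_sq {S : Multiset ℝ} {k : ℕ} (hk : k + 2 ≤ card S) :
    S.esymmMean k * S.esymmMean (k + 2) ≤ S.esymmMean (k + 1) ^ 2 := by
  obtain ⟨T, hT, hTS⟩ := exists_esymmMean_eq_of_le_card hk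
  rw [← hTS k (by omega), ← hTS (k + 1) (by omega), ← hTS (k + 2) le_rfl]
  by_cases h0 : (0 : ℝ) ∈ T
  · have hprod : T.esymmMean (k + 2) = 0 := by
      rw [← hT, esymmMean, esymm_card, prod_eq_zero h0, zero_div]
    rw [hprod, mul_zero]
    positivity
  have h1 := esymmMean_map_inv_mul h0 (i := 1) (j := k + 1) (by omega)
  have h2 := esymmMean_map_inv_mul h0 (i := 2) (j := k) (by omega)
  have hbase := esymmMean_two_le_sq (S := T.map (·⁻¹)) (by rw [card_map]; omega)
  rw [← h1, ← h2, ← hT]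
  nlinarith [mul_le_mul_of_nonneg_right hbase (sq_nonneg (T.esymmMean (card T)))]

theorem esymm_mul_le_sq (S : Multiset ℝ) (k : ℕ) :
    S.esymm k * S.esymm (k + 2) ≤ S.esymm (k + 1) ^ 2 := by
  rcases Nat.lt_or_ge (card S) (k + 2) with hS | hS
  · rw [esymm_eq_zero_of_card_lt hS, mul_zero]
    positivity
  have hσ : ∀ l ≤ card S, S.esymm l = (card S).choose l * S.esymmMean l := fun l hl => by
    have : ((card S).choose l : ℝ) ≠ 0 := by exact_mod_cast (Nat.choose_pos hl).ne'
    rw [esymmMean, mul_div_cancel₀ _ this]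
  rw [hσ k (by omega), hσ (k + 1) (by omega), hσ (k + 2) hS]
  have hc : ((card S).choose k : ℝ) * (card S).choose (k + 2) ≤ (card S).choose (k + 1) ^ 2 := by
    exact_mod_cast Nat.choose_mul_choose_add_two_le_sq _ _
  have hc0 : 0 ≤ ((card S).choose k : ℝ) * (card S).choose (k + 2) := by positivity
  have hE := esymmMean_mul_le_sq hS
  rcases le_or_gt (S.esymmMean k * S.esymmMean (k + 2)) 0 with hneg | hpos
  · nlinarith [mul_nonpos_of_nonneg_of_nonpos hc0 hneg]
  · nlinarith [mul_le_mul_of_nonneg_right hc hpos.le]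

/-- Writing `σ_l(a ::ₘ T) = σ_l(T) + a σ_{l-1}(T)`, a nonpositive `σ_{k+1}(T)` would force
`a σ_k(T) > -σ_{k+1}(T) ≥ 0` and `σ_{k+2}(T) > -a σ_{k+1}(T)`, hence
`σ_k(T) σ_{k+2}(T) > σ_{k+1}(T)²`, against Newton's inequality. -/
theorem esymm_pos_of_cons {a : ℝ} {T : Multiset ℝ} {k : ℕ}
    (hΓ : ∀ l, 1 ≤ l → l ≤ k + 1 → 0 < (a ::ₘ T).esymm l) : 0 < T.esymm k := by
  induction k with
  | zero => simp [esymm_zero]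
  | succ k ih =>
    have hk := ih fun l h1 h2 => hΓ l h1 (by omega)
    have hk1 := hΓ (k + 1) (by omega) (by omega)
    have hk2 := hΓ (k + 2) (by omega) le_rfl
    rw [esymm_cons_succ] at hk1 hk2
    nlinarith [T.esymm_mul_le_sq k]

end Multiset

namespace Finset

theorem map_val_eq_cons_erase {ι β : Type*} [DecidableEq ι] (κ : ι → β) {s : Finset ι} {i : ι}
    (hi : i ∈ s) : s.val.map κ = κ i ::ₘ (s.erase i).val.map κ := by
  rw [erase_val, ← Multiset.map_cons, Multiset.cons_erase (mem_def.1 hi)]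

section CommRing

variable {ι R : Type*} [DecidableEq ι] [CommRing R] (κ : ι → R)

theorem sum_esymm_erase (s : Finset ι) (k : ℕ) :
    ∑ i ∈ s, ((s.erase i).val.map κ).esymm k = ((#s : R) - k) * (s.val.map κ).esymm k := by
  simp only [esymm_map_val]
  rw [sum_comm' (t' := s.powersetCard k) (s' := fun t => s \ t)]
  · rw [mul_sum]
    refine sum_congr rfl fun t ht => ?_
    rw [mem_powersetCard] at ht
    rw [sum_const, card_sdiff_of_subset ht.1, ht.2, nsmul_eq_mul,
      Nat.cast_sub (ht.2 ▸ card_le_card ht.1)]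
  · intro i t
    simp only [mem_powersetCard, mem_sdiff, subset_erase]
    tauto

theorem sum_mul_esymm_erase (s : Finset ι) (k : ℕ) :
    ∑ i ∈ s, κ i * ((s.erase i).val.map κ).esymm k = (k + 1) * (s.val.map κ).esymm (k + 1) := by
  have hterm : ∀ i ∈ s, κ i * ((s.erase i).val.map κ).esymm k =
      (s.val.map κ).esymm (k + 1) - ((s.erase i).val.map κ).esymm (k + 1) := fun i hi => by
    rw [map_val_eq_cons_erase κ hi, Multiset.esymm_cons_succ]
    ring
  rw [sum_congr rfl hterm, sum_sub_distrib, sum_esymm_erase, sum_const, nsmul_eq_mul]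
  push_cast
  ring

end CommRing

variable {ι : Type*} [DecidableEq ι] (κ : ι → ℝ)

theorem succ_mul_esymm_le_of_le (s : Finset ι) {k : ℕ} {M : ℝ} (hM : ∀ i ∈ s, κ i ≤ M)
    (hΓ : ∀ l, 1 ≤ l → l ≤ k + 1 → 0 < (s.val.map κ).esymm l) :
    (k + 1) * (s.val.map κ).esymm (k + 1) ≤ M * (((#s : ℝ) - k) * (s.val.map κ).esymm k) := by
  rw [← sum_mul_esymm_erase, ← sum_esymm_erase, mul_sum]
  refine sum_le_sum fun i hi => mul_le_mul_of_nonneg_right (hM i hi) ?_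
  exact (Multiset.esymm_pos_of_cons (a := κ i) (map_val_eq_cons_erase κ hi ▸ hΓ)).le

theorem succ_mul_esymm_le_card_mul_esymm_erase (s : Finset ι) {k : ℕ} {i : ι} (hi : i ∈ s)
    (hmax : ∀ j ∈ s, κ j ≤ κ i) (hΓ : ∀ l, 1 ≤ l → l ≤ k + 1 → 0 < (s.val.map κ).esymm l) :
    (k + 1) * (s.val.map κ).esymm (k + 1) ≤ #s * (κ i * ((s.erase i).val.map κ).esymm k) := by
  set A := ((s.erase i).val.map κ).esymm (k + 1)
  set P := κ i * ((s.erase i).val.map κ).esymm k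
  have hΓ' : ∀ l, 1 ≤ l → l ≤ k + 1 → 0 < (κ i ::ₘ (s.erase i).val.map κ).esymm l :=
    map_val_eq_cons_erase κ hi ▸ hΓ
  have hsplit : (s.val.map κ).esymm (k + 1) = A + P := by
    rw [map_val_eq_cons_erase κ hi, Multiset.esymm_cons_succ]
  have hk : (k : ℝ) + 1 ≤ #s := by
    have := Multiset.le_card_of_esymm_ne_zero (hΓ (k + 1) (by omega) le_rfl).ne'
    rw [Multiset.card_map, card_val] at this
    exact_mod_cast this
  rw [hsplit]
  rcases le_or_gt A 0 with hA | hA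
  · have hP : 0 < P := by linarith [hsplit ▸ hΓ (k + 1) (by omega) le_rfl]
    nlinarith
  have hΓA : ∀ l, 1 ≤ l → l ≤ k + 1 → 0 < ((s.erase i).val.map κ).esymm l := fun l hl1 hl2 => by
    rcases hl2.lt_or_eq with hlt | rfl
    · exact Multiset.esymm_pos_of_cons fun l' h1 h2 => hΓ' l' h1 (by omega)
    · exact hA
  have hbound :=
    succ_mul_esymm_le_of_le κ (s.erase i) (fun j hj => hmax j (mem_of_mem_erase hj)) hΓA
  rw [card_erase_of_mem hi, Nat.cast_sub (card_pos.2 ⟨i, hi⟩), Nat.cast_one] at hbound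
  linarith

end Finset

open Finset

theorem esymm_eq_esymm_map_val (n k : ℕ) (κ : Fin n → ℝ) :
    esymm n k κ = (univ.val.map κ).esymm k :=
  (esymm_map_val κ univ k).symm

theorem esymmRem_eq_esymm_map_val (n k : ℕ) (i : Fin n) (κ : Fin n → ℝ) :
    esymmRem n k i κ = ((univ.erase i).val.map κ).esymm k :=
  (esymm_map_val κ (univ.erase i) k).symm

/-- If `κ₁ ≥ κ₂ ≥ … ≥ κ_n` and `κ ∈ Γ_m⁺` (that is, `σ_l(κ) > 0` for all `1 ≤ l ≤ m`),
then for `1 ≤ m ≤ n`: `κ₁·σ_{m-1,1}(κ) ≥ (m/n)·σ_m(κ)`. -/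
theorem esymm_top_index_bound (n m : ℕ) (hm : 1 ≤ m) (hmn : m ≤ n)
    (κ : Fin n → ℝ)
    (hsort : ∀ i j : Fin n, i ≤ j → κ j ≤ κ i)
    (hΓ : ∀ l : ℕ, 1 ≤ l → l ≤ m → 0 < esymm n l κ) :
    ((m : ℝ) / (n : ℝ)) * esymm n m κ ≤
      κ ⟨0, by omega⟩ * esymmRem n (m - 1) ⟨0, by omega⟩ κ := by
  obtain ⟨k, rfl⟩ : ∃ k, m = k + 1 := ⟨m - 1, by omega⟩
  simp only [esymm_eq_esymm_map_val, esymmRem_eq_esymm_map_val, Nat.add_sub_cancel] at hΓ ⊢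
  have key := succ_mul_esymm_le_card_mul_esymm_erase κ univ (mem_univ _)
    (fun j _ => hsort ⟨0, by omega⟩ j (Nat.zero_le j.val)) hΓ
  rw [card_univ, Fintype.card_fin] at key
  rw [div_mul_eq_mul_div, div_le_iff₀ (by exact_mod_cast (by omega : 0 < n))]
  push_cast
  linarith
end

section
/- Let p_k(κ) = σ_k(κ)/C(n,k) denote the normalized elementary symmetric functions. If κ ∈ Γ_m⁺, then p₁(κ) ≥ p₂(κ)^{1/2} ≥ ... ≥ p_m(κ)^{1/m} (MacLaurin's inequality chain). -/
/-- The normalized elementary symmetric function `p_k = σ_k / C(n,k)`. -/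
noncomputable def pnorm (n k : ℕ) (κ : Fin n → ℝ) : ℝ :=
  esymm n k κ / (Nat.choose n k : ℝ)

theorem Multiset.esymm_cons_succ_s7 {R : Type*} [CommSemiring R] (a : R) (s : Multiset R) (k : ℕ) :
    (a ::ₘ s).esymm (k + 1) = s.esymm (k + 1) + a * s.esymm k := by
  simp [Multiset.esymm, Multiset.powersetCard_cons, Multiset.sum_map_mul_left]

theorem Multiset.esymm_one {R : Type*} [CommSemiring R] (s : Multiset R) : s.esymm 1 = s.sum := by
  simp [Multiset.esymm, Multiset.powersetCard_one]

theorem Multiset.two_mul_esymm_two {R : Type*} [CommRing R] (s : Multiset R) :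
    2 * s.esymm 2 = s.sum ^ 2 - (s.map (· ^ 2)).sum := by
  induction s using Multiset.induction_on with
  | empty => simp [Multiset.esymm, Multiset.powersetCard_zero_right]
  | cons a s ih =>
    rw [Multiset.esymm_cons_succ_s7, Multiset.esymm_one, Multiset.sum_cons, Multiset.map_cons,
      Multiset.sum_cons]
    linear_combination ih

theorem Multiset.exists_univ_val_map_eq {α : Type*} {n : ℕ} (s : Multiset α)
    (hs : Multiset.card s = n) :
    ∃ f : Fin n → α, Finset.univ.val.map f = s := by
  rw [← Multiset.coe_toList s] at hs ⊢
  generalize s.toList = l at hs ⊢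
  rw [Multiset.coe_card] at hs
  subst hs
  exact ⟨l.get, by rw [Fin.univ_val_map, List.ofFn_get]⟩

section Derivative

open Polynomial

theorem card_roots_derivative_prod_X_sub_C (s : Multiset ℝ) :
    Multiset.card (derivative (s.map (X - C ·)).prod).roots = Multiset.card s - 1 := by
  refine le_antisymm ?_ ?_
  · calc _ ≤ (derivative (s.map (X - C ·)).prod).natDegree := card_roots' _
      _ = _ := by rw [natDegree_derivative, natDegree_multiset_prod_X_sub_C_eq_card]
  · have := card_roots_le_derivative (s.map (X - C ·)).prod
    rw [roots_multiset_prod_X_sub_C] at this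
    omega

theorem esymm_roots_derivative_prod_X_sub_C {n k : ℕ} (s : Multiset ℝ)
    (hs : Multiset.card s = n + 1) (hk : k ≤ n) :
    ((n : ℝ) + 1) * (derivative (s.map (X - C ·)).prod).roots.esymm k =
      ((n + 1 - k : ℕ) : ℝ) * s.esymm k := by
  set P := (s.map (X - C ·)).prod
  have hP : P.natDegree = n + 1 := by rw [natDegree_multiset_prod_X_sub_C_eq_card, hs]
  have hP' : (derivative P).natDegree = n := by rw [natDegree_derivative, hP]; rfl
  have hroots : Multiset.card (derivative P).roots = (derivative P).natDegree := by
    rw [card_roots_derivative_prod_X_sub_C, hs, hP']; rfl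
  have hlc : (derivative P).leadingCoeff = n + 1 := by
    have hmonic : P.Monic := monic_multiset_prod_of_monic _ _ fun a _ => monic_X_sub_C a
    rw [leadingCoeff_derivative, hP, hmonic.leadingCoeff]
    push_cast; ring
  have hvieta := coeff_eq_esymm_roots_of_card hroots (k := n - k) (by omega)
  rw [coeff_derivative, Multiset.prod_X_sub_C_coeff s (by omega), hlc, hP', hs,
    show n + 1 - (n - k + 1) = k by omega, show n - (n - k) = k by omega] at hvieta
  have hcast : ((n - k : ℕ) : ℝ) + 1 = ((n + 1 - k : ℕ) : ℝ) := by
    rw [show n + 1 - k = n - k + 1 by omega]; push_cast; ring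
  refine mul_left_cancel₀ (pow_ne_zero k (by norm_num : (-1 : ℝ) ≠ 0)) ?_
  rw [← hcast]
  linear_combination -hvieta

end Derivative

theorem esymm_eq_esymm_univ_val_map (n k : ℕ) (κ : Fin n → ℝ) :
    esymm n k κ = (Finset.univ.val.map κ).esymm k :=
  (Finset.esymm_map_val κ _ k).symm

theorem pnorm_zero (n : ℕ) (κ : Fin n → ℝ) : pnorm n 0 κ = 1 := by
  simp [pnorm, esymm]

theorem exists_pnorm_eq_pnorm_succ {n : ℕ} (κ : Fin (n + 1) → ℝ) :
    ∃ μ : Fin n → ℝ, ∀ k ≤ n, pnorm n k μ = pnorm (n + 1) k κ := by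
  set s := Finset.univ.val.map κ
  have hs : Multiset.card s = n + 1 := by simp [s]
  obtain ⟨μ, hμ⟩ := Multiset.exists_univ_val_map_eq (n := n) _
    (by rw [card_roots_derivative_prod_X_sub_C, hs]; rfl)
  refine ⟨μ, fun k hk => ?_⟩
  have hesymm := esymm_roots_derivative_prod_X_sub_C s hs hk
  rw [← hμ, ← esymm_eq_esymm_univ_val_map] at hesymm
  have hchoose : (n.choose k : ℝ) * (n + 1) = (n + 1).choose k * (n + 1 - k : ℕ) := by
    exact_mod_cast Nat.choose_mul_succ_eq n k
  have hpos : (0 : ℝ) < (n + 1 - k : ℕ) := by exact_mod_cast (by omega : 0 < n + 1 - k)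
  have hc : (n.choose k : ℝ) ≠ 0 := by exact_mod_cast (Nat.choose_pos hk).ne'
  have hc' : ((n + 1).choose k : ℝ) ≠ 0 := by exact_mod_cast (Nat.choose_pos (by omega)).ne'
  rw [pnorm, pnorm, esymm_eq_esymm_univ_val_map _ _ κ, div_eq_div_iff hc hc']
  refine mul_left_cancel₀ hpos.ne' ?_
  linear_combination (n.choose k : ℝ) * hesymm - esymm n k μ * hchoose

theorem pnorm_two_le_sq {n : ℕ} (κ : Fin n → ℝ) : pnorm n 2 κ ≤ pnorm n 1 κ ^ 2 := by
  rcases lt_or_ge n 2 with hn | hn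
  · simp [pnorm, Nat.choose_eq_zero_of_lt hn, sq_nonneg]
  set S := ∑ i, κ i
  set Q := ∑ i, κ i ^ 2
  have htwo : 2 * esymm n 2 κ = S ^ 2 - Q := by
    rw [esymm_eq_esymm_univ_val_map, Multiset.two_mul_esymm_two, Multiset.map_map]; rfl
  have hCS : S ^ 2 ≤ n * Q := by
    simpa using sq_sum_le_card_mul_sum_sq (s := Finset.univ) (f := κ)
  have hn' : (2 : ℝ) ≤ n := by exact_mod_cast hn
  have hS : esymm n 1 κ = S := by rw [esymm_eq_esymm_univ_val_map, Multiset.esymm_one]; rfl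
  rw [pnorm, pnorm, Nat.cast_choose_two, Nat.choose_one_right, hS, div_pow,
    div_le_div_iff₀ (by nlinarith) (by positivity)]
  nlinarith

noncomputable def cofactor {n : ℕ} (κ : Fin n → ℝ) (i : Fin n) : ℝ :=
  ∏ j ∈ {i}ᶜ, κ j

theorem esymm_eq_sum_powersetCard_compl {n k : ℕ} (κ : Fin n → ℝ) (hk : k ≤ n) :
    esymm n k κ = ∑ t ∈ Finset.univ.powersetCard (n - k), ∏ j ∈ tᶜ, κ j := by
  refine Finset.sum_nbij' (·ᶜ) (·ᶜ) ?_ ?_ (by simp) (by simp) (by simp)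
  all_goals
    intro t ht
    have := t.card_le_univ
    simp only [Finset.card_compl, Fintype.card_fin, Finset.mem_powersetCard_univ] at ht this ⊢
    omega

theorem cofactor_mul_cofactor {n : ℕ} (κ : Fin n → ℝ) {i j : Fin n} (hij : i ≠ j) :
    cofactor κ i * cofactor κ j = (∏ l, κ l) * ∏ l ∈ {i, j}ᶜ, κ l := by
  have hcompl {a b : Fin n} (hab : a ≠ b) : (∏ l ∈ {a, b}ᶜ, κ l) * κ a = cofactor κ b := by
    rw [Finset.compl_insert, Finset.prod_erase_mul _ _ (by simpa using hab), cofactor]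
  have htop : ∏ l, κ l = κ i * cofactor κ i := by
    rw [cofactor, ← Finset.prod_mul_prod_compl {i}, Finset.prod_singleton]
  rw [htop, ← hcompl hij, ← hcompl hij.symm, Finset.pair_comm]
  ring

theorem esymm_pred_eq_esymm_one_cofactor {n : ℕ} (κ : Fin (n + 1) → ℝ) :
    esymm (n + 1) n κ = esymm (n + 1) 1 (cofactor κ) := by
  rw [esymm_eq_sum_powersetCard_compl κ (by omega), Nat.add_sub_cancel_left, esymm]
  refine Finset.sum_congr rfl fun t ht => ?_
  obtain ⟨i, rfl⟩ := Finset.card_eq_one.1 (Finset.mem_powersetCard_univ.1 ht)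
  simp [cofactor]

theorem esymm_top_mul_esymm_eq_esymm_two_cofactor {n : ℕ} (κ : Fin (n + 2) → ℝ) :
    esymm (n + 2) (n + 2) κ * esymm (n + 2) n κ = esymm (n + 2) 2 (cofactor κ) := by
  have htop : esymm (n + 2) (n + 2) κ = ∏ l, κ l := by
    have hself := Finset.powersetCard_self (Finset.univ : Finset (Fin (n + 2)))
    rw [Finset.card_univ, Fintype.card_fin] at hself
    rw [esymm, hself, Finset.sum_singleton]
  rw [htop, esymm_eq_sum_powersetCard_compl κ (by omega), Nat.add_sub_cancel_left, esymm,
    Finset.mul_sum]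
  refine Finset.sum_congr rfl fun t ht => ?_
  obtain ⟨i, j, hij, rfl⟩ := Finset.card_eq_two.1 (Finset.mem_powersetCard_univ.1 ht)
  rw [Finset.prod_pair hij, cofactor_mul_cofactor κ hij]

theorem pnorm_mul_pnorm_top_le_sq {n : ℕ} (κ : Fin (n + 2) → ℝ) :
    pnorm (n + 2) n κ * pnorm (n + 2) (n + 2) κ ≤ pnorm (n + 2) (n + 1) κ ^ 2 :=
  calc pnorm (n + 2) n κ * pnorm (n + 2) (n + 2) κ = pnorm (n + 2) 2 (cofactor κ) := by
        rw [pnorm, pnorm, pnorm, ← esymm_top_mul_esymm_eq_esymm_two_cofactor,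
          Nat.choose_symm_add, Nat.choose_self]
        ring
    _ ≤ pnorm (n + 2) 1 (cofactor κ) ^ 2 := pnorm_two_le_sq _
    _ = pnorm (n + 2) (n + 1) κ ^ 2 := by
        rw [pnorm, pnorm, esymm_pred_eq_esymm_one_cofactor, Nat.choose_succ_self_right,
          Nat.choose_one_right]

theorem pnorm_mul_pnorm_add_two_le_sq {n k : ℕ} (κ : Fin n → ℝ) (hk : k + 2 ≤ n) :
    pnorm n k κ * pnorm n (k + 2) κ ≤ pnorm n (k + 1) κ ^ 2 := by
  induction n with
  | zero => omega
  | succ n ih =>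
    rcases (show n = k + 1 ∨ k + 2 ≤ n by omega) with rfl | hkn
    · exact pnorm_mul_pnorm_top_le_sq κ
    · obtain ⟨μ, hμ⟩ := exists_pnorm_eq_pnorm_succ κ
      rw [← hμ k (by omega), ← hμ (k + 1) (by omega), ← hμ (k + 2) hkn]
      exact ih μ hkn

theorem pow_le_pow_add_one_of_mul_le_sq {p : ℕ → ℝ} {m : ℕ} (h0 : p 0 = 1)
    (hpos : ∀ l ≤ m, 0 < p l) (hlc : ∀ k, k + 2 ≤ m → p k * p (k + 2) ≤ p (k + 1) ^ 2) :
    ∀ k < m, p (k + 1) ^ k ≤ p k ^ (k + 1) := by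
  intro k hk
  induction k with
  | zero => simp [h0]
  | succ k ih =>
    have h0k := (hpos k (by omega)).le
    have h1k := hpos (k + 1) (by omega)
    have h2k := (hpos (k + 2) (by omega)).le
    refine le_of_mul_le_mul_right ?_ (pow_pos h1k k)
    calc p (k + 2) ^ (k + 1) * p (k + 1) ^ k ≤ p (k + 2) ^ (k + 1) * p k ^ (k + 1) := by
          gcongr; exact ih (by omega)
      _ = (p k * p (k + 2)) ^ (k + 1) := by ring
      _ ≤ (p (k + 1) ^ 2) ^ (k + 1) := by gcongr; exact hlc k hk
      _ = p (k + 1) ^ (k + 1 + 1) * p (k + 1) ^ k := by ring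

theorem Real.rpow_one_div_add_one_le_rpow_one_div {a b : ℝ} {k : ℕ} (ha : 0 ≤ a) (hb : 0 ≤ b)
    (hk : k ≠ 0) (h : a ^ k ≤ b ^ (k + 1)) : a ^ ((1 : ℝ) / (k + 1)) ≤ b ^ ((1 : ℝ) / k) := by
  have hk' : (k : ℝ) ≠ 0 := by exact_mod_cast hk
  have ha' : a ^ ((1 : ℝ) / (k + 1)) = (a ^ k) ^ ((1 : ℝ) / (k * (k + 1))) := by
    rw [← Real.rpow_natCast, ← Real.rpow_mul ha]
    field_simp
  have hb' : b ^ ((1 : ℝ) / k) = (b ^ (k + 1)) ^ ((1 : ℝ) / (k * (k + 1))) := by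
    rw [← Real.rpow_natCast, ← Real.rpow_mul hb]
    push_cast
    field_simp
  rw [ha', hb']
  exact Real.rpow_le_rpow (by positivity) h (by positivity)

/-- MacLaurin's inequality chain: if `κ ∈ Γ_m⁺` (i.e. `p_l(κ) > 0` for `1 ≤ l ≤ m`),
then `p₁(κ) ≥ p₂(κ)^{1/2} ≥ … ≥ p_m(κ)^{1/m}`. -/
theorem maclaurin_chain (n m : ℕ) (hmn : m ≤ n) (κ : Fin n → ℝ)
    (hΓ : ∀ l : ℕ, 1 ≤ l → l ≤ m → 0 < pnorm n l κ) :
    ∀ k : ℕ, 1 ≤ k → k < m →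
      (pnorm n (k + 1) κ) ^ ((1 : ℝ) / ((k : ℝ) + 1)) ≤
        (pnorm n k κ) ^ ((1 : ℝ) / (k : ℝ)) := by
  have hpos : ∀ l ≤ m, 0 < pnorm n l κ := by
    intro l hl
    rcases Nat.eq_zero_or_pos l with rfl | hl0
    · exact (pnorm_zero n κ).symm ▸ one_pos
    · exact hΓ l hl0 hl
  have hpow := pow_le_pow_add_one_of_mul_le_sq (p := (pnorm n · κ)) (pnorm_zero n κ) hpos
    fun k hk => pnorm_mul_pnorm_add_two_le_sq κ (by omega)
  intro k hk hkm
  exact Real.rpow_one_div_add_one_le_rpow_one_div (hpos _ hkm).le (hpos k hkm.le).le (by omega)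
    (hpow k hkm)
end
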